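/- Let G be a finite simple graph in which every vertex has positive degree, let λ be an eigenvalue of the normalized Laplacian L, and let v be a unit eigenvector of L with eigenvalue λ. Then the sum of the edge-derivative expressions over all edges of G vanishes: Σ_{{x,y} ∈ E(G)} F(v, λ, {x,y}) = 0, where the sum ranges over the unordered edges of G. -/

import Mathlib

open Finset

variable {V : Type*} [Fintype V] [DecidableEq V]

/-- The normalized Laplacian `L = I - D^{-1/2} A D^{-1/2}` of a simple graph. -/
noncomputable def normLap (G : SimpleGraph V) [DecidableRel G.Adj] : Matrix V V ℝ :=
  fun x y =>
    if x = y then 1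
    else if G.Adj x y then -(1 / Real.sqrt ((G.degree x : ℝ) * (G.degree y : ℝ)))
    else 0

/-- The Aksoy–Purvine–Young edge-derivative expression
`F(v, λ, {x,y}) = (1-λ)(v_x²/d_x + v_y²/d_y) − 2 v_x v_y / √(d_x d_y)`. -/
noncomputable def edgeDeriv (G : SimpleGraph V) [DecidableRel G.Adj]
    (v : V → ℝ) (lam : ℝ) (x y : V) : ℝ :=
  (1 - lam) * (v x ^ 2 / (G.degree x : ℝ) + v y ^ 2 / (G.degree y : ℝ))
    - 2 * (v x * v y) / Real.sqrt ((G.degree x : ℝ) * (G.degree y : ℝ))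

lemma edgeDeriv_symm (G : SimpleGraph V) [DecidableRel G.Adj] (v : V → ℝ) (lam : ℝ) :
    ∀ x y : V, edgeDeriv G v lam x y = edgeDeriv G v lam y x := by
  intro x y
  unfold edgeDeriv
  rw [mul_comm ((G.degree x : ℝ)) ((G.degree y : ℝ))]
  ring

/-- The edge-derivative expression, as a function on unordered pairs. -/
noncomputable def edgeDerivSym (G : SimpleGraph V) [DecidableRel G.Adj]
    (v : V → ℝ) (lam : ℝ) : Sym2 V → ℝ :=
  Sym2.lift ⟨fun x y => edgeDeriv G v lam x y, edgeDeriv_symm G v lam⟩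

/-! Write `F(v, λ, {x,y}) = h(x,y) + h(y,x)` with `h(x,y) = (1-λ) v_x²/d_x - v_x v_y/√(d_x d_y)`.
The sum over edges of such a symmetrization is the sum of `h` over darts, i.e. over vertices `x`
and their neighbours `y`. For fixed `x`, the `x`-row of `L v = λ v` reads
`∑_{y ∼ x} v_y/√(d_x d_y) = (1-λ) v_x`, so `∑_{y ∼ x} h(x,y) = (1-λ) v_x² - v_x (1-λ) v_x = 0`. -/

section

variable (G : SimpleGraph V) [DecidableRel G.Adj]

namespace SimpleGraph

theorem sum_darts_eq_sum_neighborFinset {M : Type*} [AddCommMonoid M] (h : V → V → M) :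
    ∑ d : G.Dart, h d.fst d.snd = ∑ x, ∑ y ∈ G.neighborFinset x, h x y := by
  rw [← sum_fiberwise univ (fun d : G.Dart => d.fst)]
  refine sum_congr rfl fun x _ => ?_
  rw [dart_fst_fiber, sum_image fun _ _ _ _ h => G.dartOfNeighborSet_injective x h]
  exact (sum_subtype _ (fun y => G.mem_neighborFinset x y) (h x)).symm

theorem sum_edgeFinset_eq_sum_neighborFinset {M : Type*} [AddCommMonoid M] (g : Sym2 V → M)
    (h : V → V → M) (hgh : ∀ x y, G.Adj x y → g s(x, y) = h x y + h y x) :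
    ∑ e ∈ G.edgeFinset, g e = ∑ x, ∑ y ∈ G.neighborFinset x, h x y := by
  rw [← sum_darts_eq_sum_neighborFinset, ← sum_fiberwise_of_maps_to (g := Dart.edge)
    (t := G.edgeFinset) (fun d _ => G.mem_edgeFinset.2 d.edge_mem)]
  refine sum_congr rfl fun e he => ?_
  induction e with
  | _ x y =>
    have hxy : G.Adj x y := G.mem_edgeFinset.1 he
    let d : G.Dart := ⟨(x, y), hxy⟩
    rw [hgh x y hxy, show s(x, y) = d.edge from rfl, d.edge_fiber, sum_pair d.symm_ne.symm]
    rfl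

end SimpleGraph

open SimpleGraph

theorem normLap_mulVec_apply (v : V → ℝ) (x : V) :
    (normLap G).mulVec v x
      = v x - ∑ y ∈ G.neighborFinset x, v y / √((G.degree x : ℝ) * G.degree y) := by
  have hterm : ∀ y, normLap G x y * v y = (if x = y then v y else 0)
      - if G.Adj x y then v y / √((G.degree x : ℝ) * G.degree y) else 0 := by
    intro y
    by_cases hxy : x = y
    · subst hxy
      simp [normLap]
    · by_cases hadj : G.Adj x y
      · simp only [normLap, if_neg hxy, if_pos hadj]
        ring
      · simp [normLap, hxy, hadj]
  rw [Matrix.mulVec, dotProduct]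
  simp only [hterm, sum_sub_distrib, sum_ite_eq, mem_univ, if_true, ← sum_filter,
    neighborFinset_eq_filter]

noncomputable def edgeDerivHalf (v : V → ℝ) (lam : ℝ) (x y : V) : ℝ :=
  (1 - lam) * v x ^ 2 / G.degree x - v x * v y / √((G.degree x : ℝ) * G.degree y)

omit [DecidableEq V] in
theorem edgeDeriv_eq_edgeDerivHalf_add (v : V → ℝ) (lam : ℝ) (x y : V) :
    edgeDeriv G v lam x y = edgeDerivHalf G v lam x y + edgeDerivHalf G v lam y x := by
  rw [edgeDeriv, edgeDerivHalf, edgeDerivHalf, mul_comm (G.degree y : ℝ)]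
  ring

theorem sum_neighborFinset_edgeDerivHalf_eq_zero {v : V → ℝ} {lam : ℝ}
    (heig : (normLap G).mulVec v = lam • v) (x : V) :
    ∑ y ∈ G.neighborFinset x, edgeDerivHalf G v lam x y = 0 := by
  have hrow : ∑ y ∈ G.neighborFinset x, v y / √((G.degree x : ℝ) * G.degree y)
      = (1 - lam) * v x := by
    have := congrFun heig x
    rw [normLap_mulVec_apply, Pi.smul_apply, smul_eq_mul] at this
    linarith
  by_cases hdeg : G.degree x = 0
  · rw [← card_neighborFinset_eq_degree, card_eq_zero] at hdeg
    rw [hdeg, sum_empty]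
  · have hdeg' : (G.degree x : ℝ) ≠ 0 := by exact_mod_cast hdeg
    simp only [edgeDerivHalf, sum_sub_distrib, sum_const, card_neighborFinset_eq_degree,
      nsmul_eq_mul, mul_div_assoc, ← mul_sum, hrow]
    field_simp
    ring

end

theorem edge_derivative_sum_over_edges_zero_general
    (G : SimpleGraph V) [DecidableRel G.Adj]
    (lam : ℝ) (v : V → ℝ)
    (heig : (normLap G).mulVec v = lam • v) :
    ∑ e ∈ G.edgeFinset, edgeDerivSym G v lam e = 0 := by
  rw [G.sum_edgeFinset_eq_sum_neighborFinset _ (edgeDerivHalf G v lam)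
    fun x y _ => edgeDeriv_eq_edgeDerivHalf_add G v lam x y]
  exact sum_eq_zero fun x _ => sum_neighborFinset_edgeDerivHalf_eq_zero G heig x

theorem edge_derivative_sum_over_edges_zero
    (G : SimpleGraph V) [DecidableRel G.Adj]
    (hdeg : ∀ z : V, 0 < G.degree z)
    (lam : ℝ) (v : V → ℝ)
    (hunit : ∑ z, v z ^ 2 = 1)
    (heig : (normLap G).mulVec v = lam • v) :
    ∑ e ∈ G.edgeFinset, edgeDerivSym G v lam e = 0 :=
  edge_derivative_sum_over_edges_zero_general G lam v heig
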